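/- Strong Liouville property for discrete p-harmonious functions: Let d ≥ 1 and 0 ≤ α < 1. If u : ℤ^d → ℝ is nonnegative and satisfies u(x) = (α/2)·( max_{1≤j≤2d} u(x+e_j) + min_{1≤j≤2d} u(x+e_j) ) + ((1−α)/(2d))·Σ_{j=1}^{2d} u(x+e_j) for every x ∈ ℤ^d, then u is constant. -/

import Mathlib

/-!
By the Harnack inequality `γ v (x + e_j) ≤ v x`, the nonnegative solutions normalized by
`v 0 = 1` form a compact set in the product topology, stable under the normalized translations
`x ↦ v (x + t) / v t`. On a closed translation-stable subfamily the minimum `θ` of `v ↦ v e_j` is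
attained, and a minimizer `w` satisfies `w (x + e_j) = θ w x` for all `x`: the solutions
`θ • w ≤ w (· + e_j)` touch at the origin, so they agree by the strong comparison principle.
Cutting the family down direction by direction produces a solution that is exponential in every
direction. For the `p`-harmonious mean an exponential solution is constant, by AM-GM applied to
`w e_j` and `w (-e_j) = (w e_j)⁻¹`. So the minimal ratio in each direction is `1`: every solution
is nondecreasing along every lattice direction, hence constant.
-/

/-- The `2d` lattice directions on `ℤ^d`: for `j < d` this is the standard basis
vector `e_j`, and for `d ≤ j < 2d` it is `-e_{j-d}`. -/
def nbr (d : ℕ) (j : Fin (2 * d)) : Fin d → ℤ :=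
  fun i => if (j : ℕ) = (i : ℕ) then 1 else if (j : ℕ) = (i : ℕ) + d then -1 else 0

/-- `u : ℤ^d → ℝ` is `F`-harmonic if `u x = F (u (x+e_1), …, u (x+e_{2d}))` for all `x`. -/
def IsFHarmonic (d : ℕ) (F : (Fin (2 * d) → ℝ) → ℝ) (u : (Fin d → ℤ) → ℝ) : Prop :=
  ∀ x : Fin d → ℤ, u x = F fun j => u fun i => x i + nbr d j i

lemma Finset.mul₀_inf' {K ι : Type*} [Field K] [LinearOrder K] [IsStrictOrderedRing K]
    {s : Finset ι} (hs : s.Nonempty) {c : K} (hc : 0 ≤ c) (f : ι → K) :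
    c * s.inf' hs f = s.inf' hs fun i => c * f i := by
  rcases hc.eq_or_lt with rfl | hc
  · simp
  · exact map_finset_inf' (OrderIso.mulLeft₀ c hc) hs f

namespace PHarmonious

open Finset

variable {d : ℕ}

def oppDir (j : Fin (2 * d)) : Fin (2 * d) :=
  if h : (j : ℕ) < d then ⟨j + d, by omega⟩ else ⟨j - d, by omega⟩

lemma oppDir_involutive : Function.Involutive (oppDir (d := d)) := by
  intro j
  apply Fin.ext
  unfold oppDir
  by_cases h : (j : ℕ) < d
  · simp [h]
  · have : (j : ℕ) - d < d := by omega
    simp [h, this]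
    omega

lemma nbr_oppDir (j : Fin (2 * d)) : nbr d (oppDir j) = -nbr d j := by
  funext i
  have := i.isLt
  unfold oppDir nbr
  split_ifs <;> simp_all <;> omega

lemma nbr_add_nbr_oppDir (j : Fin (2 * d)) : nbr d j + nbr d (oppDir j) = 0 := by
  rw [nbr_oppDir, add_neg_cancel]

lemma add_nbr_add_nbr_oppDir (x : Fin d → ℤ) (j : Fin (2 * d)) :
    x + nbr d j + nbr d (oppDir j) = x := by
  rw [add_assoc, nbr_add_nbr_oppDir, add_zero]

lemma nbr_eq_single (i : Fin d) : nbr d ⟨i, by omega⟩ = Pi.single i 1 := by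
  funext k
  simp only [nbr, Pi.single_apply, Fin.ext_iff]
  split_ifs <;> omega

theorem induction_nbr {P : (Fin d → ℤ) → Prop} (x₀ : Fin d → ℤ) (h₀ : P x₀)
    (hstep : ∀ x j, P x → P (x + nbr d j)) (x : Fin d → ℤ) : P x := by
  let S : AddSubmonoid (Fin d → ℤ) :=
    { carrier := {y | ∀ z, P z → P (z + y)}
      zero_mem' := by simp
      add_mem' := fun ha hb z hz => by rw [← add_assoc]; exact hb _ (ha z hz) }
  have hsingle : ∀ (i : Fin d) (n : ℤ), Pi.single i n ∈ S := by
    intro i n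
    induction n using Int.induction_on with
    | zero => simp [S]
    | succ n ih =>
      intro z hz
      rw [Pi.single_add, ← add_assoc, ← nbr_eq_single]
      exact hstep _ _ (ih z hz)
    | pred n ih =>
      intro z hz
      have hneg : Pi.single i (-1 : ℤ) = nbr d (oppDir ⟨i, by omega⟩) := by
        rw [nbr_oppDir, nbr_eq_single, Pi.single_neg]
      rw [sub_eq_add_neg, Pi.single_add, ← add_assoc, hneg]
      exact hstep _ _ (ih z hz)
  have hall : x - x₀ ∈ S := by
    rw [← Finset.univ_sum_single (x - x₀)]
    exact sum_mem fun i _ => hsingle i _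
  simpa using hall x₀ h₀

structure IsHarnackMean (F : (Fin (2 * d) → ℝ) → ℝ) (γ : ℝ) : Prop where
  continuous : Continuous F
  strictMono : StrictMono F
  smul : ∀ c : ℝ, 0 ≤ c → ∀ a, F (c • a) = c * F a
  const_pos : 0 < γ
  harnack : ∀ a, 0 ≤ a → ∀ j, γ * a j ≤ F a

def normalizedSolutions (F : (Fin (2 * d) → ℝ) → ℝ) : Set ((Fin d → ℤ) → ℝ) :=
  {v | IsFHarmonic d F v ∧ 0 ≤ v ∧ v 0 = 1}

noncomputable def normShift (v : (Fin d → ℤ) → ℝ) (t : Fin d → ℤ) : (Fin d → ℤ) → ℝ :=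
  fun x => v (x + t) / v t

end PHarmonious

namespace IsFHarmonic

open PHarmonious

variable {d : ℕ} {F : (Fin (2 * d) → ℝ) → ℝ} {γ : ℝ} {u v : (Fin d → ℤ) → ℝ}

lemma apply_eq (hu : IsFHarmonic d F u) (x : Fin d → ℤ) :
    u x = F fun j => u (x + nbr d j) :=
  hu x

lemma const_smul (hF : IsHarnackMean F γ) (hu : IsFHarmonic d F u) {c : ℝ} (hc : 0 ≤ c) :
    IsFHarmonic d F (c • u) := fun x => by
  rw [Pi.smul_apply, hu.apply_eq x, smul_eq_mul, ← hF.smul c hc]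
  rfl

lemma comp_add_right (hu : IsFHarmonic d F u) (t : Fin d → ℤ) :
    IsFHarmonic d F fun x => u (x + t) := fun x => by
  show u (x + t) = F fun j => u (x + nbr d j + t)
  simpa only [add_right_comm x t] using hu.apply_eq (x + t)

lemma harnack (hF : IsHarnackMean F γ) (hu : IsFHarmonic d F u) (hu₀ : 0 ≤ u)
    (x : Fin d → ℤ) (j : Fin (2 * d)) : γ * u (x + nbr d j) ≤ u x := by
  rw [hu.apply_eq x]
  exact hF.harnack (fun k => u (x + nbr d k)) (fun k => hu₀ _) j

lemma pos_or_eq_zero (hF : IsHarnackMean F γ) (hu : IsFHarmonic d F u) (hu₀ : 0 ≤ u) :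
    (∀ x, 0 < u x) ∨ u = 0 := by
  by_cases h : ∃ x₀, u x₀ = 0
  · obtain ⟨x₀, hx₀⟩ := h
    refine Or.inr (funext (induction_nbr x₀ hx₀ fun x j hx => ?_))
    have := hu.harnack hF hu₀ x j
    rw [hx] at this
    exact le_antisymm (nonpos_of_mul_nonpos_right this hF.const_pos) (hu₀ _)
  · push Not at h
    exact Or.inl fun x => (hu₀ x).lt_of_ne' (h x)

lemma eq_of_le_of_eq (hF : IsHarnackMean F γ) (hu : IsFHarmonic d F u) (hv : IsFHarmonic d F v)
    (hle : u ≤ v) {x₀ : Fin d → ℤ} (hx₀ : u x₀ = v x₀) : u = v := by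
  refine funext (induction_nbr x₀ hx₀ fun x j hx => ?_)
  have hnbr : (fun k => u (x + nbr d k)) = fun k => v (x + nbr d k) := by
    by_contra hne
    have := hF.strictMono (lt_of_le_of_ne (fun k => hle _) hne)
    rw [← hu.apply_eq, ← hv.apply_eq, hx] at this
    exact this.false
  exact congrFun hnbr j

lemma normShift_mem_normalizedSolutions (hF : IsHarnackMean F γ) (hu : IsFHarmonic d F u)
    (hu₀ : 0 ≤ u) {t : Fin d → ℤ} (ht : 0 < u t) : normShift u t ∈ normalizedSolutions F := by
  refine ⟨?_, fun x => div_nonneg (hu₀ _) ht.le, by simp [normShift, ht.ne']⟩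
  convert (hu.comp_add_right t).const_smul hF (inv_nonneg.2 ht.le) using 1
  funext x
  simp [normShift, div_eq_inv_mul]

end IsFHarmonic

namespace PHarmonious

open Finset

variable {d : ℕ} {F : (Fin (2 * d) → ℝ) → ℝ} {γ : ℝ} {v : (Fin d → ℤ) → ℝ}

lemma isClosed_setOf_isFHarmonic (hF : Continuous F) :
    IsClosed {v : (Fin d → ℤ) → ℝ | IsFHarmonic d F v} := by
  simp only [IsFHarmonic, Set.ofPred_forall]
  exact isClosed_iInter fun x => isClosed_eq (continuous_apply x)
    (hF.comp (continuous_pi fun j => continuous_apply _))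

lemma isClosed_normalizedSolutions (hF : IsHarnackMean F γ) :
    IsClosed (normalizedSolutions (d := d) F) :=
  (isClosed_setOf_isFHarmonic hF.continuous).inter
    ((isClosed_le continuous_const continuous_id).inter
      (isClosed_eq (continuous_apply 0) continuous_const))

lemma pos_of_mem_normalizedSolutions (hF : IsHarnackMean F γ) (hv : v ∈ normalizedSolutions F)
    (x : Fin d → ℤ) : 0 < v x := by
  obtain ⟨hharm, hv₀, hv₁⟩ := hv
  refine (hharm.pos_or_eq_zero hF hv₀).resolve_right (fun h => ?_) x
  simp [h] at hv₁

lemma exists_forall_mem_normalizedSolutions_le (hF : IsHarnackMean F γ) (x : Fin d → ℤ) :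
    ∃ B, ∀ v ∈ normalizedSolutions (d := d) F, v x ≤ B := by
  refine induction_nbr (P := fun x => ∃ B, ∀ v ∈ normalizedSolutions F, v x ≤ B) 0
    ⟨1, fun v hv => hv.2.2.le⟩ (fun x j ⟨B, hB⟩ => ⟨B / γ, fun v hv => ?_⟩) x
  rw [le_div_iff₀' hF.const_pos]
  exact (hv.1.harnack hF hv.2.1 x j).trans (hB v hv)

lemma isCompact_normalizedSolutions (hF : IsHarnackMean F γ) :
    IsCompact (normalizedSolutions (d := d) F) := by
  choose B hB using exists_forall_mem_normalizedSolutions_le (d := d) hF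
  exact (isCompact_univ_pi fun x => isCompact_Icc (a := 0) (b := B x)).of_isClosed_subset
    (isClosed_normalizedSolutions hF) fun v hv x _ => ⟨hv.2.1 x, hB x v hv⟩

variable (F) in
structure IsInvariantFamily (C : Set ((Fin d → ℤ) → ℝ)) : Prop where
  subset : C ⊆ normalizedSolutions F
  isClosed : IsClosed C
  nonempty : C.Nonempty
  normShift_mem : ∀ v ∈ C, ∀ t, normShift v t ∈ C

lemma isInvariantFamily_normalizedSolutions (hF : IsHarnackMean F γ)
    (hv : v ∈ normalizedSolutions F) : IsInvariantFamily F (normalizedSolutions (d := d) F) :=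
  ⟨subset_rfl, isClosed_normalizedSolutions hF, ⟨v, hv⟩, fun _ hw t =>
    hw.1.normShift_mem_normalizedSolutions hF hw.2.1 (pos_of_mem_normalizedSolutions hF hw t)⟩

def ratioSet (j : Fin (2 * d)) (θ : ℝ) : Set ((Fin d → ℤ) → ℝ) :=
  {v | ∀ x, v (x + nbr d j) = θ * v x}

lemma isClosed_ratioSet (j : Fin (2 * d)) (θ : ℝ) : IsClosed (ratioSet j θ) := by
  simp only [ratioSet, Set.ofPred_forall]
  exact isClosed_iInter fun x =>
    isClosed_eq (continuous_apply _) (continuous_const.mul (continuous_apply x))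

namespace IsInvariantFamily

variable {C : Set ((Fin d → ℤ) → ℝ)}

lemma inter_ratioSet (hC : IsInvariantFamily F C) {j : Fin (2 * d)} {θ : ℝ}
    (hne : (C ∩ ratioSet j θ).Nonempty) : IsInvariantFamily F (C ∩ ratioSet j θ) where
  subset := Set.inter_subset_left.trans hC.subset
  isClosed := hC.isClosed.inter (isClosed_ratioSet j θ)
  nonempty := hne
  normShift_mem v hv t := by
    refine ⟨hC.normShift_mem v hv.1 t, fun x => ?_⟩
    simp only [normShift, add_right_comm x (nbr d j) t, hv.2 (x + t), mul_div_assoc]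

lemma exists_min_ratio (hF : IsHarnackMean F γ) (hC : IsInvariantFamily F C)
    (j : Fin (2 * d)) :
    ∃ θ, (∀ v ∈ C, ∀ x, θ * v x ≤ v (x + nbr d j)) ∧ (C ∩ ratioSet j θ).Nonempty := by
  obtain ⟨w, hwC, hmin⟩ := ((isCompact_normalizedSolutions hF).of_isClosed_subset hC.isClosed
    hC.subset).exists_isMinOn hC.nonempty (continuous_apply (nbr d j)).continuousOn
  have hw := hC.subset hwC
  have hbound : ∀ v ∈ C, ∀ x, w (nbr d j) * v x ≤ v (x + nbr d j) := by
    intro v hv x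
    have : w (nbr d j) ≤ normShift v x (nbr d j) := hmin (hC.normShift_mem v hv x)
    rwa [normShift, le_div_iff₀ (pos_of_mem_normalizedSolutions hF (hC.subset hv) x),
      add_comm] at this
  refine ⟨w (nbr d j), hbound, w, hwC, fun x => ?_⟩
  have := (hw.1.const_smul hF (hw.2.1 (nbr d j))).eq_of_le_of_eq hF
    (hw.1.comp_add_right (nbr d j)) (fun x => hbound w hwC x) (x₀ := 0) (by simp [hw.2.2])
  exact (congrFun this x).symm

lemma exists_forall_mem_ratioSet (hF : IsHarnackMean F γ) (hC : IsInvariantFamily F C) :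
    ∃ w ∈ C, ∀ j, w ∈ ratioSet j (w (nbr d j)) := by
  classical
  have hcut : ∀ S : Finset (Fin (2 * d)), ∃ C' ⊆ C, IsInvariantFamily F C' ∧
      ∀ j ∈ S, ∃ θ, C' ⊆ ratioSet j θ := by
    intro S
    induction S using Finset.induction_on with
    | empty => exact ⟨C, subset_rfl, hC, by simp⟩
    | insert a S _ ih =>
      obtain ⟨C', hC'C, hC', hS⟩ := ih
      obtain ⟨θ, -, hne⟩ := hC'.exists_min_ratio hF a
      refine ⟨C' ∩ ratioSet a θ, Set.inter_subset_left.trans hC'C, hC'.inter_ratioSet hne, ?_⟩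
      simp only [Finset.mem_insert, forall_eq_or_imp]
      exact ⟨⟨θ, Set.inter_subset_right⟩,
        fun j hj => (hS j hj).imp fun _ h => Set.inter_subset_left.trans h⟩
  obtain ⟨C', hC'C, hC', hall⟩ := hcut Finset.univ
  obtain ⟨w, hw⟩ := hC'.nonempty
  refine ⟨w, hC'C hw, fun j => ?_⟩
  obtain ⟨θ, hθ⟩ := hall j (Finset.mem_univ j)
  have h₀ := hθ hw 0
  rw [zero_add, (hC'.subset hw).2.2, mul_one] at h₀
  exact h₀ ▸ hθ hw

end IsInvariantFamily

-- `c j` stands for `w (e_j)` of a solution `w` with `w (x + e_j) = w (e_j) * w x`, `w 0 = 1`;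
-- then `c (oppDir j) * c j = w 0 = 1`, and `F c = 1` is the equation at the origin.
variable (F) in
def HasRigidExponentials : Prop :=
  ∀ c : Fin (2 * d) → ℝ, (∀ j, 0 < c j) → (∀ j, c (oppDir j) * c j = 1) → F c = 1 → c = 1

namespace HasRigidExponentials

variable {u : (Fin d → ℤ) → ℝ}

lemma apply_nbr_eq_one (hrigid : HasRigidExponentials F) (hF : IsHarnackMean F γ)
    {w : (Fin d → ℤ) → ℝ} (hw : w ∈ normalizedSolutions F)
    (hexp : ∀ j, w ∈ ratioSet j (w (nbr d j))) (j : Fin (2 * d)) : w (nbr d j) = 1 := by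
  refine congrFun (hrigid (fun k => w (nbr d k))
    (fun k => pos_of_mem_normalizedSolutions hF hw _) (fun k => ?_) ?_) j
  · have := hexp (oppDir k) (nbr d k)
    rwa [nbr_add_nbr_oppDir, hw.2.2, eq_comm] at this
  · have := hw.1.apply_eq 0
    simp only [zero_add, hw.2.2] at this
    exact this.symm

lemma one_le_apply_nbr (hrigid : HasRigidExponentials F) (hF : IsHarnackMean F γ)
    (hv : v ∈ normalizedSolutions F) (j : Fin (2 * d)) : 1 ≤ v (nbr d j) := by
  have hK := isInvariantFamily_normalizedSolutions hF hv
  obtain ⟨θ, hbound, hne⟩ := hK.exists_min_ratio hF j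
  obtain ⟨w, ⟨hwK, hwθ⟩, hexp⟩ := (hK.inter_ratioSet hne).exists_forall_mem_ratioSet hF
  have hθ : θ = 1 := by
    have := hwθ 0
    rwa [zero_add, hrigid.apply_nbr_eq_one hF hwK hexp, hwK.2.2, mul_one, eq_comm] at this
  simpa [hθ, hv.2.2] using hbound v hv 0

lemma le_apply_add_nbr (hrigid : HasRigidExponentials F) (hF : IsHarnackMean F γ)
    (hu : IsFHarmonic d F u) (hu₀ : 0 ≤ u) (x : Fin d → ℤ) (j : Fin (2 * d)) :
    u x ≤ u (x + nbr d j) := by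
  rcases (hu₀ x).eq_or_lt with hx | hx
  · rw [← hx, Pi.zero_apply]
    exact hu₀ _
  have := hrigid.one_le_apply_nbr hF (hu.normShift_mem_normalizedSolutions hF hu₀ hx) j
  rwa [normShift, one_le_div hx, add_comm] at this

theorem apply_eq_apply (hrigid : HasRigidExponentials F) (hF : IsHarnackMean F γ)
    (hu : IsFHarmonic d F u) (hu₀ : 0 ≤ u) (x y : Fin d → ℤ) : u x = u y := by
  have hstep : ∀ z j, u (z + nbr d j) = u z := fun z j =>
    le_antisymm (by simpa [add_nbr_add_nbr_oppDir] using
      hrigid.le_apply_add_nbr hF hu hu₀ (z + nbr d j) (oppDir j))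
      (hrigid.le_apply_add_nbr hF hu hu₀ z j)
  exact (induction_nbr (P := fun z => u z = u x) x rfl (fun z j hz => (hstep z j).trans hz) y).symm

end HasRigidExponentials

lemma univ_fin_two_mul_nonempty (hd : 0 < d) : (univ : Finset (Fin (2 * d))).Nonempty :=
  ⟨⟨0, by omega⟩, mem_univ _⟩

noncomputable def pMean (hd : 0 < d) (α : ℝ) (a : Fin (2 * d) → ℝ) : ℝ :=
  α / 2 * (univ.sup' (univ_fin_two_mul_nonempty hd) a +
    univ.inf' (univ_fin_two_mul_nonempty hd) a) + (1 - α) / (2 * d) * ∑ j, a j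

section pMean

variable (hd : 0 < d) {α : ℝ}

lemma isHarnackMean_pMean (hα₀ : 0 ≤ α) (hα₁ : α < 1) :
    IsHarnackMean (pMean hd α) ((1 - α) / (2 * d)) := by
  have hγ : 0 < (1 - α) / (2 * d) := div_pos (by linarith) (by positivity)
  refine ⟨by unfold pMean; fun_prop, fun a b hab => ?_, fun c hc a => ?_, hγ, fun a ha j => ?_⟩
  · obtain ⟨hle, j, hj⟩ := Pi.lt_def.1 hab
    have hsup := sup'_mono_fun (hs := univ_fin_two_mul_nonempty hd) fun k _ => hle k
    have hinf := inf'_mono_fun (hs := univ_fin_two_mul_nonempty hd) fun k _ => hle k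
    have hsum := sum_lt_sum (fun k _ => hle k) ⟨j, mem_univ j, hj⟩
    have hsupinf := mul_le_mul_of_nonneg_left (add_le_add hsup hinf) (by linarith : 0 ≤ α / 2)
    have := mul_lt_mul_of_pos_left hsum hγ
    unfold pMean
    linarith
  · have hca : c • a = fun i => c * a i := rfl
    rw [pMean, pMean, hca, ← mul₀_sup' hc, ← Finset.mul₀_inf' _ hc, ← mul_sum]
    ring
  · have hinf : 0 ≤ univ.inf' (univ_fin_two_mul_nonempty hd) a := le_inf' _ _ fun k _ => ha k
    have hsup := (inf'_le a (mem_univ j)).trans (le_sup' a (mem_univ j))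
    have hsum : a j ≤ ∑ k, a k := single_le_sum (fun k _ => ha k) (mem_univ j)
    unfold pMean
    nlinarith

lemma sum_sq_sub_one_div_eq {c : Fin (2 * d) → ℝ} (hpos : ∀ j, 0 < c j)
    (hrec : ∀ j, c (oppDir j) * c j = 1) :
    ∑ j, (c j - 1) ^ 2 / c j = 2 * ∑ j, c j - 4 * d := by
  have hterm : ∀ j, (c j - 1) ^ 2 / c j = c j + c (oppDir j) - 2 := fun j => by
    rw [eq_inv_of_mul_eq_one_left (hrec j)]
    field_simp [(hpos j).ne']
    ring
  have hopp : ∑ j, c (oppDir j) = ∑ j, c j := Equiv.sum_comp oppDir_involutive.toPerm c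
  simp only [hterm, sum_sub_distrib, sum_add_distrib, hopp, sum_const, card_univ,
    Fintype.card_fin, nsmul_eq_mul]
  push_cast
  ring

lemma two_le_sup'_add_inf' {c : Fin (2 * d) → ℝ} (hpos : ∀ j, 0 < c j)
    (hrec : ∀ j, c (oppDir j) * c j = 1) :
    2 ≤ univ.sup' (univ_fin_two_mul_nonempty hd) c +
      univ.inf' (univ_fin_two_mul_nonempty hd) c := by
  obtain ⟨j, -, hj⟩ := exists_mem_eq_inf' (univ_fin_two_mul_nonempty hd) c
  have hsup := le_sup' c (mem_univ (oppDir j))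
  have := hrec j
  have := hpos j
  nlinarith [sq_nonneg (c j - 1)]

lemma hasRigidExponentials_pMean (hα₀ : 0 ≤ α) (hα₁ : α < 1) :
    HasRigidExponentials (pMean hd α) := by
  intro c hpos hrec hc
  have hsum : ∑ j, c j ≤ 2 * d := by
    have hd' : (0 : ℝ) < 2 * d := by positivity
    have hsupinf := mul_le_mul_of_nonneg_left (two_le_sup'_add_inf' hd hpos hrec)
      (by linarith : 0 ≤ α / 2)
    refine le_of_mul_le_mul_left ?_ (div_pos (by linarith : 0 < 1 - α) hd')
    rw [div_mul_cancel₀ _ hd'.ne']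
    unfold pMean at hc
    linarith
  have hnonneg : ∀ j ∈ univ, 0 ≤ (c j - 1) ^ 2 / c j := fun j _ =>
    div_nonneg (sq_nonneg _) (hpos j).le
  have hzero : ∑ j, (c j - 1) ^ 2 / c j = 0 := by
    refine le_antisymm ?_ (sum_nonneg hnonneg)
    rw [sum_sq_sub_one_div_eq hpos hrec]
    linarith
  funext j
  have := (sum_eq_zero_iff_of_nonneg hnonneg).1 hzero j (mem_univ j)
  rw [div_eq_zero_iff, sq_eq_zero_iff, sub_eq_zero] at this
  exact this.resolve_right (hpos j).ne'

end pMean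

end PHarmonious

/-- Strong Liouville property for discrete `p`-harmonious functions on `ℤ^d`. -/
theorem liouville_pharmonious (d : ℕ) (hd : 0 < d) (α : ℝ) (hα0 : 0 ≤ α) (hα1 : α < 1)
    (u : (Fin d → ℤ) → ℝ) (hu : ∀ x, 0 ≤ u x)
    (hharm : ∀ x : Fin d → ℤ,
      u x = (α / 2) *
          (Finset.univ.sup' ⟨⟨0, by omega⟩, Finset.mem_univ _⟩
              (fun j : Fin (2 * d) => u fun i => x i + nbr d j i) +
            Finset.univ.inf' ⟨⟨0, by omega⟩, Finset.mem_univ _⟩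
              (fun j : Fin (2 * d) => u fun i => x i + nbr d j i)) +
        ((1 - α) / (2 * (d : ℝ))) * ∑ j : Fin (2 * d), u fun i => x i + nbr d j i) :
    ∀ x y : Fin d → ℤ, u x = u y :=
  (PHarmonious.hasRigidExponentials_pMean hd hα0 hα1).apply_eq_apply
    (PHarmonious.isHarnackMean_pMean hd hα0 hα1) (u := u) hharm hu
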